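/- The quantity (1/√k) · log ∏_{p ≤ √k, p prime} ∏_{i=0}^{⌊log_p k⌋} p/(p − a_{i,p}(k)) has limit superior at most 3 as the integer k → ∞; in particular this double product is at most e^{3√k(1+o(1))}. -/
import Mathlib

open Finset Filter Real Asymptotics

/-- `digit i p k` is the `i`-th digit of `k` in base `p`, i.e. `⌊k / p^i⌋ mod p`. -/
def digit (i p k : ℕ) : ℕ := (k / p ^ i) % p

lemma digit_succ (p k i : ℕ) : digit (i + 1) p k = digit i p (k / p) := by
  simp only [digit]
  rw [Nat.div_div_eq_div_mul, ← pow_succ']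

lemma digit_lt (i p k : ℕ) (hp : 0 < p) : digit i p k < p := Nat.mod_lt _ hp

/-- Product of `1 + aᵢ` over base-`p` digits of `k` is at most `k+1`. -/
lemma prod_one_add_digit_le (p : ℕ) (hp : 2 ≤ p) (k : ℕ) :
    ∏ i ∈ Finset.range (Nat.log p k + 1), (1 + digit i p k) ≤ k + 1 := by
  induction k using Nat.strong_induction_on with
  | _ k ih =>
    rcases lt_or_ge k p with hk | hk
    · have hlog : Nat.log p k = 0 := by
        rw [Nat.log_eq_zero_iff]; exact Or.inl hk
      rw [hlog]
      simp [digit, Nat.mod_eq_of_lt hk]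
      omega
    · have hp1 : 1 < p := hp
      have hlog : Nat.log p k = Nat.log p (k / p) + 1 := by
        have h1 := Nat.log_div_base p k
        have h2 := Nat.log_pos hp1 hk
        omega
      have hklt : k / p < k := Nat.div_lt_self (by omega) hp1
      have hq := ih (k / p) hklt
      rw [hlog, Finset.prod_range_succ']
      simp only [digit_succ]
      have hd0 : digit 0 p k = k % p := by simp [digit]
      rw [hd0]
      set q := k / p with hqdef
      set r := k % p with hrdef
      have e : p * q + r = k := Nat.div_add_mod k p
      have hr : r < p := Nat.mod_lt _ (by omega)
      have h1 : q * (1 + r) ≤ q * p := Nat.mul_le_mul_left _ (by omega)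
      have h2 : q * p = p * q := Nat.mul_comm _ _
      calc (∏ i ∈ Finset.range (Nat.log p q + 1), (1 + digit i p q)) * (1 + r)
          ≤ (q + 1) * (1 + r) := Nat.mul_le_mul_right _ hq
        _ = q * (1 + r) + (1 + r) := by ring
        _ ≤ k + 1 := by omega

lemma factor_le (p a : ℕ) (ha : a < p) : (p : ℝ) / ((p : ℝ) - a) ≤ 1 + a := by
  have h2 : (a : ℝ) + 1 ≤ p := by exact_mod_cast ha
  have h0 : (0 : ℝ) < (p : ℝ) - a := by linarith
  rw [div_le_iff₀ h0]
  have h1 : (0 : ℝ) ≤ (a : ℝ) := a.cast_nonneg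
  nlinarith

lemma one_le_factor (p a : ℕ) (ha : a < p) : 1 ≤ (p : ℝ) / ((p : ℝ) - a) := by
  have h2 : (a : ℝ) + 1 ≤ p := by exact_mod_cast ha
  have h0 : (0 : ℝ) < (p : ℝ) - a := by linarith
  rw [le_div_iff₀ h0]
  have h1 : (0 : ℝ) ≤ (a : ℝ) := a.cast_nonneg
  linarith

lemma inner_prod_le (p k : ℕ) (hp : 2 ≤ p) :
    ∏ i ∈ Finset.range (Nat.log p k + 1), ((p : ℝ) / ((p : ℝ) - digit i p k))
      ≤ (k : ℝ) + 1 := by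
  have hd : ∀ i, digit i p k < p := fun i => digit_lt i p k (by omega)
  calc ∏ i ∈ Finset.range (Nat.log p k + 1), ((p : ℝ) / ((p : ℝ) - digit i p k))
      ≤ ∏ i ∈ Finset.range (Nat.log p k + 1), (1 + (digit i p k : ℝ)) := by
        apply Finset.prod_le_prod
        · intro i _
          have := one_le_factor p (digit i p k) (hd i)
          linarith
        · intro i _
          exact factor_le p (digit i p k) (hd i)
    _ = ((∏ i ∈ Finset.range (Nat.log p k + 1), (1 + digit i p k) : ℕ) : ℝ) := by
        push_cast; ring
    _ ≤ (k : ℝ) + 1 := by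
        have := prod_one_add_digit_le p hp k
        exact_mod_cast this

lemma one_le_prod_real {ι : Type*} (s : Finset ι) (f : ι → ℝ)
    (h : ∀ i ∈ s, 1 ≤ f i) : 1 ≤ ∏ i ∈ s, f i := by
  calc (1:ℝ) = ∏ _i ∈ s, 1 := Finset.prod_const_one.symm
    _ ≤ ∏ i ∈ s, f i := Finset.prod_le_prod (fun _ _ => zero_le_one) h

lemma prod_le_pow_card_real {ι : Type*} (s : Finset ι) (f : ι → ℝ) (n : ℝ)
    (h0 : ∀ i ∈ s, 0 ≤ f i) (h : ∀ i ∈ s, f i ≤ n) : ∏ i ∈ s, f i ≤ n ^ s.card := by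
  calc ∏ i ∈ s, f i ≤ ∏ _i ∈ s, n := Finset.prod_le_prod h0 h
    _ = n ^ s.card := Finset.prod_const n

lemma aux_cancel (s L4 L : ℝ) (h1 : L ≠ 0) (h2 : s ≠ 0) :
    (s * L4 / (0.96 * L)) * (2.02 * L) / s = L4 * 2.02 / 0.96 := by
  field_simp

lemma one_le_inner_prod (p k : ℕ) (hp : 2 ≤ p) :
    1 ≤ ∏ i ∈ Finset.range (Nat.log p k + 1), ((p : ℝ) / ((p : ℝ) - digit i p k)) := by
  apply one_le_prod_real
  intro i _
  exact one_le_factor p (digit i p k) (digit_lt i p k (by omega))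

set_option maxHeartbeats 1000000 in
/-- The limsup of `(1/√k) · log ∏_{p ≤ √k} ∏_{i=0}^{⌊log_p k⌋} p/(p − a_{i,p}(k))`
is at most `3`; i.e. the double product is at most `e^{3√k(1+o(1))}`.
Here `p ≤ √k` is expressed as `p * p ≤ k`. -/
theorem small_primes_product_bound :
    Filter.limsup (fun k : ℕ =>
      Real.log (∏ p ∈ (Finset.range (k + 1)).filter (fun p => p.Prime ∧ p * p ≤ k),
        ∏ i ∈ Finset.range (Nat.log p k + 1), (p : ℝ) / (p - digit i p k))
      / Real.sqrt k) atTop ≤ 3 := by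
  set f := fun k : ℕ =>
      Real.log (∏ p ∈ (Finset.range (k + 1)).filter (fun p => p.Prime ∧ p * p ≤ k),
        ∏ i ∈ Finset.range (Nat.log p k + 1), (p : ℝ) / (p - digit i p k))
      / Real.sqrt k with hf
  have hmem : ∀ k p, p ∈ (Finset.range (k + 1)).filter (fun p => p.Prime ∧ p * p ≤ k) →
      2 ≤ p ∧ p * p ≤ k := by
    intro k p hp
    rw [Finset.mem_filter] at hp
    exact ⟨hp.2.1.two_le, hp.2.2⟩
  have hprod_pos : ∀ k, (1:ℝ) ≤ ∏ p ∈ (Finset.range (k + 1)).filter (fun p => p.Prime ∧ p * p ≤ k),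
      ∏ i ∈ Finset.range (Nat.log p k + 1), (p : ℝ) / (p - digit i p k) := by
    intro k
    apply one_le_prod_real
    intro p hp
    exact one_le_inner_prod p k (hmem k p hp).1
  have hf_nonneg : ∀ k, 0 ≤ f k := by
    intro k
    apply div_nonneg _ (Real.sqrt_nonneg _)
    exact Real.log_nonneg (hprod_pos k)
  apply Filter.limsup_le_of_le
  · exact (Filter.isBoundedUnder_of_eventually_ge
      (Filter.Eventually.of_forall hf_nonneg)).isCoboundedUnder_le
  -- eventual bound
  have hsqrt_tendsto : Tendsto Nat.sqrt atTop atTop := by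
    apply tendsto_atTop_atTop_of_monotone (fun _ _ h => Nat.sqrt_le_sqrt h)
    intro b
    exact ⟨b * b, Nat.le_sqrt.2 le_rfl⟩
  have hsR : Tendsto (fun k : ℕ => ((Nat.sqrt k : ℕ) : ℝ)) atTop atTop :=
    tendsto_natCast_atTop_atTop.comp hsqrt_tendsto
  -- eventual real facts about x = sqrt k
  have hreal : ∀ᶠ x : ℝ in atTop,
      (100:ℝ) ≤ x ∧ (x ^ (0.96:ℝ) + 1) * (2.02 * Real.log x) ≤ 0.08 * x := by
    have hlo := (isLittleO_log_rpow_atTop (show (0:ℝ) < 0.04 by norm_num)).def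
      (show (0:ℝ) < 0.019 by norm_num)
    filter_upwards [hlo, eventually_ge_atTop (1:ℝ), eventually_ge_atTop (100:ℝ)]
      with x hx hx1 hx100
    refine ⟨hx100, ?_⟩
    have hxpos : (0:ℝ) < x := by linarith
    have hlog_nonneg : 0 ≤ Real.log x := Real.log_nonneg hx1
    have hrpow_nonneg : (0:ℝ) ≤ x ^ (0.04:ℝ) := Real.rpow_nonneg (le_of_lt hxpos) _
    have hx' : Real.log x ≤ 0.019 * x ^ (0.04:ℝ) := by
      have := hx
      rwa [Real.norm_eq_abs, Real.norm_eq_abs, abs_of_nonneg hlog_nonneg,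
        abs_of_nonneg hrpow_nonneg] at this
    have h96 : (1:ℝ) ≤ x ^ (0.96:ℝ) := Real.one_le_rpow hx1 (by norm_num)
    have hmul : x ^ (0.96:ℝ) * x ^ (0.04:ℝ) = x := by
      rw [← Real.rpow_add hxpos]
      norm_num
    have h96nonneg : (0:ℝ) ≤ x ^ (0.96:ℝ) := by linarith
    calc (x ^ (0.96:ℝ) + 1) * (2.02 * Real.log x)
        ≤ (2 * x ^ (0.96:ℝ)) * (2.02 * (0.019 * x ^ (0.04:ℝ))) := by
          apply mul_le_mul (by linarith) (by linarith) (by positivity) (by positivity)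
      _ = 0.07676 * (x ^ (0.96:ℝ) * x ^ (0.04:ℝ)) := by ring
      _ = 0.07676 * x := by rw [hmul]
      _ ≤ 0.08 * x := by linarith
  filter_upwards [hsR.eventually hreal] with k hk
  obtain ⟨hs100, hB⟩ := hk
  set s : ℕ := Nat.sqrt k with hsdef
  have hspos : (0:ℝ) < (s:ℝ) := by linarith
  have hsnat : (2:ℕ) ≤ s := by exact_mod_cast (by linarith : (2:ℝ) ≤ (s:ℝ))
  have hlog1 : (1:ℝ) ≤ Real.log s := by
    rw [Real.le_log_iff_exp_le hspos]
    calc Real.exp 1 ≤ 2.7182818286 := (Real.exp_one_lt_d9).le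
      _ ≤ (s:ℝ) := by linarith
  have hlogpos : (0:ℝ) < Real.log s := by linarith
  set S := (Finset.range (k + 1)).filter (fun p => p.Prime ∧ p * p ≤ k) with hS
  set c : ℝ := (s:ℝ) ^ (0.96:ℝ) with hc
  have hcnonneg : (0:ℝ) ≤ c := Real.rpow_nonneg (le_of_lt hspos) _
  -- prime count bound
  have hsub : ∀ p ∈ S, p ≤ s := by
    intro p hp
    exact Nat.le_sqrt.2 (hmem k p hp).2
  set S1 := S.filter (fun p : ℕ => (p:ℝ) ≤ c) with hS1
  set S2 := S.filter (fun p : ℕ => ¬ ((p:ℝ) ≤ c)) with hS2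
  have hcardsplit : S1.card + S2.card = S.card :=
    Finset.card_filter_add_card_filter_not _
  have hcard1 : (S1.card : ℝ) ≤ c + 1 := by
    have hsub1 : S1 ⊆ Finset.range (Nat.floor c + 1) := by
      intro p hp
      rw [Finset.mem_range, Nat.lt_succ_iff]
      rw [hS1, Finset.mem_filter] at hp
      exact Nat.le_floor hp.2
    have := Finset.card_le_card hsub1
    rw [Finset.card_range] at this
    have hfloor : ((Nat.floor c : ℕ) : ℝ) ≤ c := Nat.floor_le hcnonneg
    calc (S1.card : ℝ) ≤ ((Nat.floor c + 1 : ℕ) : ℝ) := by exact_mod_cast this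
      _ ≤ c + 1 := by push_cast; linarith
  have hcard2 : (S2.card : ℝ) ≤ (s:ℝ) * Real.log 4 / (0.96 * Real.log s) := by
    -- product of primes in S2 is at most 4^s
    have hprodnat : ∏ p ∈ S2, p ≤ 4 ^ s := by
      have hsub2 : S2 ⊆ (Finset.range (s + 1)).filter Nat.Prime := by
        intro p hp
        rw [hS2, Finset.mem_filter] at hp
        have hpS : p ∈ S := hp.1
        have hps := hsub p hpS
        have hprime : p.Prime := (Finset.mem_filter.1 hpS).2.1
        rw [Finset.mem_filter, Finset.mem_range, Nat.lt_succ_iff]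
        exact ⟨hps, hprime⟩
      calc ∏ p ∈ S2, p ≤ ∏ p ∈ (Finset.range (s + 1)).filter Nat.Prime, p := by
            apply Finset.prod_le_prod_of_subset_of_one_le' hsub2
            intro i hi _
            exact (Finset.mem_filter.1 hi).2.one_lt.le
        _ = primorial s := rfl
        _ ≤ 4 ^ s := primorial_le_4_pow s
    have hcpow : c ^ S2.card ≤ (4:ℝ) ^ s := by
      calc c ^ S2.card = ∏ _p ∈ S2, c := (Finset.prod_const c).symm
        _ ≤ ∏ p ∈ S2, (p:ℝ) := by
            apply Finset.prod_le_prod (fun _ _ => hcnonneg)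
            intro p hp
            rw [hS2, Finset.mem_filter] at hp
            linarith [hp.2, not_le.1 hp.2]
        _ = ((∏ p ∈ S2, p : ℕ) : ℝ) := by push_cast; ring
        _ ≤ ((4 ^ s : ℕ) : ℝ) := by exact_mod_cast hprodnat
        _ = (4:ℝ) ^ s := by push_cast; ring
    have hcpos : (0:ℝ) < c := Real.rpow_pos_of_pos hspos _
    have hlogle : (S2.card : ℝ) * Real.log c ≤ (s:ℝ) * Real.log 4 := by
      have := Real.log_le_log (pow_pos hcpos _) hcpow
      rwa [Real.log_pow, Real.log_pow] at this
    have hlogc : Real.log c = 0.96 * Real.log s := Real.log_rpow hspos _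
    rw [hlogc] at hlogle
    rw [le_div_iff₀ (by positivity)]
    linarith
  -- log of product bound
  have hprod_le : (∏ p ∈ S, ∏ i ∈ Finset.range (Nat.log p k + 1),
      (p : ℝ) / (p - digit i p k)) ≤ ((k:ℝ) + 1) ^ S.card := by
    apply prod_le_pow_card_real
    · intro p hp
      have := one_le_inner_prod p k (hmem k p hp).1
      linarith
    · intro p hp
      exact inner_prod_le p k (hmem k p hp).1
  have hT : Real.log (∏ p ∈ S, ∏ i ∈ Finset.range (Nat.log p k + 1),
      (p : ℝ) / (p - digit i p k)) ≤ (S.card : ℝ) * Real.log ((k:ℝ) + 1) := by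
    calc Real.log (∏ p ∈ S, ∏ i ∈ Finset.range (Nat.log p k + 1),
          (p : ℝ) / (p - digit i p k))
        ≤ Real.log (((k:ℝ) + 1) ^ S.card) :=
          Real.log_le_log (by linarith [hprod_pos k]) hprod_le
      _ = (S.card : ℝ) * Real.log ((k:ℝ) + 1) := by rw [Real.log_pow]
  -- bound on log (k+1)
  have hk_lt : (k:ℝ) + 1 ≤ ((s:ℝ) + 1) ^ 2 := by
    have h0 : k < (s + 1) * (s + 1) := by
      rw [hsdef]
      simpa [Nat.succ_eq_add_one] using Nat.lt_succ_sqrt k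
    have h1 : k + 1 ≤ (s + 1) * (s + 1) := h0
    have h' : ((k + 1 : ℕ) : ℝ) ≤ (((s+1) * (s+1) : ℕ) : ℝ) := by exact_mod_cast h1
    push_cast at h'
    nlinarith [h']
  have hlogk : Real.log ((k:ℝ) + 1) ≤ 2.02 * Real.log s := by
    have h1 : ((s:ℝ) + 1) ≤ 1.01 * s := by linarith
    have h2 : (k:ℝ) + 1 ≤ (1.01 * s) ^ 2 := by nlinarith
    calc Real.log ((k:ℝ) + 1) ≤ Real.log ((1.01 * s) ^ 2) :=
          Real.log_le_log (by positivity) h2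
      _ = 2 * Real.log (1.01 * s) := by
          rw [show ((1.01 * (s:ℝ)) ^ 2) = (1.01 * s) ^ (2:ℕ) by norm_num, Real.log_pow]
          norm_num
      _ = 2 * (Real.log 1.01 + Real.log s) := by
          rw [Real.log_mul (by norm_num) (ne_of_gt hspos)]
      _ ≤ 2 * (0.01 + Real.log s) := by
          have := Real.log_le_sub_one_of_pos (show (0:ℝ) < 1.01 by norm_num)
          linarith
      _ ≤ 2.02 * Real.log s := by linarith
  -- sqrt bound
  have hsqrt_ge : (s:ℝ) ≤ Real.sqrt k := by
    rw [show (s:ℝ) = Real.sqrt ((s:ℝ)^2) by rw [Real.sqrt_sq (le_of_lt hspos)]]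
    apply Real.sqrt_le_sqrt
    have := Nat.sqrt_le' k
    exact_mod_cast this
  have hT_nonneg : 0 ≤ Real.log (∏ p ∈ S, ∏ i ∈ Finset.range (Nat.log p k + 1),
      (p : ℝ) / (p - digit i p k)) := Real.log_nonneg (hprod_pos k)
  have hlogk_nonneg : (0:ℝ) ≤ Real.log ((k:ℝ) + 1) := by
    apply Real.log_nonneg
    have : (0:ℝ) ≤ (k:ℝ) := Nat.cast_nonneg k
    linarith
  -- main chain
  have hcardR : (S.card : ℝ) ≤ (c + 1) + (s:ℝ) * Real.log 4 / (0.96 * Real.log s) := by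
    have : (S.card : ℝ) = (S1.card : ℝ) + (S2.card : ℝ) := by exact_mod_cast hcardsplit.symm
    rw [this]
    linarith
  have key : f k ≤ ((c + 1) + (s:ℝ) * Real.log 4 / (0.96 * Real.log s))
      * (2.02 * Real.log s) / s := by
    rw [hf]
    calc Real.log (∏ p ∈ S, ∏ i ∈ Finset.range (Nat.log p k + 1),
          (p : ℝ) / (p - digit i p k)) / Real.sqrt k
        ≤ Real.log (∏ p ∈ S, ∏ i ∈ Finset.range (Nat.log p k + 1),
          (p : ℝ) / (p - digit i p k)) / s :=
          div_le_div_of_nonneg_left hT_nonneg hspos hsqrt_ge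
      _ ≤ ((S.card : ℝ) * Real.log ((k:ℝ) + 1)) / s :=
          (div_le_div_iff_of_pos_right hspos).mpr hT
      _ ≤ (((c + 1) + (s:ℝ) * Real.log 4 / (0.96 * Real.log s))
            * (2.02 * Real.log s)) / s :=
          (div_le_div_iff_of_pos_right hspos).mpr
            (mul_le_mul hcardR hlogk hlogk_nonneg (by positivity))
  have hfinal : ((c + 1) + (s:ℝ) * Real.log 4 / (0.96 * Real.log s))
      * (2.02 * Real.log s) / s ≤ 3 := by
    have hexpand : ((c + 1) + (s:ℝ) * Real.log 4 / (0.96 * Real.log s))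
        * (2.02 * Real.log s) / s
        = (c + 1) * (2.02 * Real.log s) / s
          + ((s:ℝ) * Real.log 4 / (0.96 * Real.log s)) * (2.02 * Real.log s) / s := by
      ring
    have hsecond : ((s:ℝ) * Real.log 4 / (0.96 * Real.log s)) * (2.02 * Real.log s) / s
        = Real.log 4 * 2.02 / 0.96 :=
      aux_cancel _ _ _ (ne_of_gt hlogpos) (ne_of_gt hspos)
    have hfirst : (c + 1) * (2.02 * Real.log s) / s ≤ 0.08 := by
      rw [div_le_iff₀ hspos]
      exact hB
    have hlog4 : Real.log 4 ≤ 1.3863 := by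
      have : (4:ℝ) = 2 ^ (2:ℕ) := by norm_num
      rw [this, Real.log_pow]
      have := Real.log_two_lt_d9
      push_cast
      linarith
    rw [hexpand, hsecond]
    have h3 : Real.log 4 * 2.02 / 0.96 ≤ 1.3863 * 2.02 / 0.96 := by gcongr
    have h4 : (1.3863 : ℝ) * 2.02 / 0.96 ≤ 2.92 := by norm_num
    linarith
  linarith [key, hfinal]
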